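/- Properties of the profile curve in the case B > 0: let τ > 0 and ϑ ∈ (0,π/2) with B = (τ²+1)cos²ϑ − 1 > 0; set α₁ = (τ·√B·cos ϑ + B)/τ, α₂ = (τ·√B·cos ϑ − B)/τ, g₁₁ = (√B − τ·cos ϑ)/(2√B), g₃₃ = (√B + τ·cos ϑ)/(2√B), and define γ : ℝ → ℝ⁴ by γ(u) = (√g₃₃·cos(α₂u), −√g₃₃·sin(α₂u), √(−g₁₁)·cos(α₁u), √(−g₁₁)·sin(α₁u)). Then for all u ∈ ℝ: ⟨γ(u),γ(u)⟩ = 1 (so γ lies in SL(2,ℝ)); ⟨γ'(u),J₁γ(u)⟩ = −τ⁻¹·sin²ϑ; ⟨γ'(u),γ'(u)⟩ = −τ⁻²·sin²ϑ·B; and, for the metric g_τ at p = γ(u), g_τ(γ'(u),γ'(u)) = sin²ϑ and g_τ(−τ⁻¹J₁γ(u), γ'(u)) = sin²ϑ. -/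

import Mathlib

noncomputable section

/-- The semi-definite inner product of signature (2,2) on ℝ⁴. -/
def ip (v w : Fin 4 → ℝ) : ℝ := v 0 * w 0 + v 1 * w 1 - v 2 * w 2 - v 3 * w 3

/-- The complex structure J₁ of ℝ⁴. -/
def J1 (v : Fin 4 → ℝ) : Fin 4 → ℝ := ![-v 1, v 0, -v 3, v 2]

/-- The metric g_τ at the point p of SL(2,ℝ), applied to vectors X, Y ∈ ℝ⁴. -/
def gtau (τ : ℝ) (p X Y : Fin 4 → ℝ) : ℝ :=
  -ip X Y + (1 + τ ^ 2) * ip X (J1 p) * ip Y (J1 p)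

/-!
The profile curve is a product of two circles, of radii `√g₃₃` and `√(-g₁₁)`, turning with
constant speeds `α₂` and `α₁`. Hence `⟨γ, γ⟩ = g₃₃ + g₁₁`, `⟨γ', J₁γ⟩ = -(g₃₃ α₂ - g₁₁ α₁)` and
`⟨γ', γ'⟩ = g₃₃ α₂² + g₁₁ α₁²` are constant, and with `r = √B`, `k = τ cos ϑ` (so that
`sin² ϑ = k² - r²`) they reduce to rational identities in `r`, `k`, `τ`. Both values of `g_τ`
only depend on these three numbers.
-/

open Real

section InnerProduct

variable (p v w X : Fin 4 → ℝ)

theorem ip_comm : ip v w = ip w v := by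
  simp only [ip]; ring

theorem ip_smul_left (c : ℝ) : ip (c • v) w = c * ip v w := by
  simp only [ip, Pi.smul_apply, smul_eq_mul]; ring

theorem ip_J1_J1 : ip (J1 v) (J1 w) = ip v w := by
  simp only [ip, J1, Matrix.cons_val]
  ring

theorem gtau_self (τ : ℝ) : gtau τ p X X = -ip X X + (1 + τ ^ 2) * ip X (J1 p) ^ 2 := by
  rw [gtau]; ring

theorem gtau_neg_inv_smul_J1 {τ : ℝ} {p : Fin 4 → ℝ} (hp : ip p p = 1) (X : Fin 4 → ℝ) :
    gtau τ p (-τ⁻¹ • J1 p) X = -τ * ip X (J1 p) := by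
  rw [gtau, ip_smul_left, ip_smul_left, ip_J1_J1, hp, ip_comm (J1 p)]
  rcases eq_or_ne τ 0 with rfl | hτ
  · simp
  · field_simp; ring

end InnerProduct

section TorusCurve

def torusCurve (a β c α : ℝ) (s : ℝ) : Fin 4 → ℝ :=
  ![a * cos (β * s), -(a * sin (β * s)), c * cos (α * s), c * sin (α * s)]

variable (a β c α s : ℝ)

theorem ip_torusCurve_self :
    ip (torusCurve a β c α s) (torusCurve a β c α s) = a ^ 2 - c ^ 2 := by
  simp only [ip, torusCurve, Matrix.cons_val]
  linear_combination a ^ 2 * cos_sq_add_sin_sq (β * s) - c ^ 2 * cos_sq_add_sin_sq (α * s)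

theorem hasDerivAt_torusCurve :
    HasDerivAt (torusCurve a β c α)
      ![-(a * β * sin (β * s)), -(a * β * cos (β * s)), -(c * α * sin (α * s)),
        c * α * cos (α * s)] s := by
  have hβ : HasDerivAt (β * ·) β s := by simpa using (hasDerivAt_id s).const_mul β
  have hα : HasDerivAt (α * ·) α s := by simpa using (hasDerivAt_id s).const_mul α
  refine hasDerivAt_pi.2 fun i => ?_
  fin_cases i <;> simp only [torusCurve, Fin.zero_eta, Fin.mk_one, Fin.reduceFinMk, Matrix.cons_val]
  · exact (hβ.cos.const_mul a).congr_deriv (by ring)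
  · exact (hβ.sin.const_mul a).neg.congr_deriv (by ring)
  · exact (hα.cos.const_mul c).congr_deriv (by ring)
  · exact (hα.sin.const_mul c).congr_deriv (by ring)

theorem ip_deriv_torusCurve_J1 :
    ip (deriv (torusCurve a β c α) s) (J1 (torusCurve a β c α s)) = -(a ^ 2 * β + c ^ 2 * α) := by
  simp only [(hasDerivAt_torusCurve a β c α s).deriv, ip, J1, torusCurve, Matrix.cons_val]
  linear_combination
    -a ^ 2 * β * cos_sq_add_sin_sq (β * s) - c ^ 2 * α * cos_sq_add_sin_sq (α * s)

theorem ip_deriv_torusCurve_self :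
    ip (deriv (torusCurve a β c α) s) (deriv (torusCurve a β c α) s) =
      a ^ 2 * β ^ 2 - c ^ 2 * α ^ 2 := by
  simp only [(hasDerivAt_torusCurve a β c α s).deriv, ip, Matrix.cons_val]
  linear_combination a ^ 2 * β ^ 2 * cos_sq_add_sin_sq (β * s) -
    c ^ 2 * α ^ 2 * cos_sq_add_sin_sq (α * s)

end TorusCurve

theorem profile_curve_B_pos (τ ϑ B α₁ α₂ g₁₁ g₃₃ : ℝ)
    (hτ : 0 < τ) (hϑ : ϑ ∈ Set.Ioo 0 (Real.pi / 2))
    (hB : B = (τ ^ 2 + 1) * Real.cos ϑ ^ 2 - 1) (hBpos : 0 < B)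
    (hα₁ : α₁ = (τ * Real.sqrt B * Real.cos ϑ + B) / τ)
    (hα₂ : α₂ = (τ * Real.sqrt B * Real.cos ϑ - B) / τ)
    (hg₁₁ : g₁₁ = (Real.sqrt B - τ * Real.cos ϑ) / (2 * Real.sqrt B))
    (hg₃₃ : g₃₃ = (Real.sqrt B + τ * Real.cos ϑ) / (2 * Real.sqrt B))
    (γ : ℝ → Fin 4 → ℝ)
    (hγ : γ = fun s => ![Real.sqrt g₃₃ * Real.cos (α₂ * s),
                         -(Real.sqrt g₃₃ * Real.sin (α₂ * s)),
                         Real.sqrt (-g₁₁) * Real.cos (α₁ * s),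
                         Real.sqrt (-g₁₁) * Real.sin (α₁ * s)]) :
    ∀ u : ℝ,
      ip (γ u) (γ u) = 1 ∧
      ip (deriv γ u) (J1 (γ u)) = -(Real.sin ϑ ^ 2) / τ ∧
      ip (deriv γ u) (deriv γ u) = -(Real.sin ϑ ^ 2 * B) / τ ^ 2 ∧
      gtau τ (γ u) (deriv γ u) (deriv γ u) = Real.sin ϑ ^ 2 ∧
      gtau τ (γ u) (-τ⁻¹ • J1 (γ u)) (deriv γ u) = Real.sin ϑ ^ 2 := by
  intro u
  change γ = torusCurve (√g₃₃) α₂ (√(-g₁₁)) α₁ at hγ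
  obtain ⟨r, hr, rfl⟩ : ∃ r, 0 < r ∧ B = r ^ 2 := ⟨√B, sqrt_pos.2 hBpos, (sq_sqrt hBpos.le).symm⟩
  rw [sqrt_sq hr.le] at hα₁ hα₂ hg₁₁ hg₃₃
  have hcos : 0 < cos ϑ := cos_pos_of_mem_Ioo ⟨by linarith [hϑ.1, pi_pos], hϑ.2⟩
  have hsin : sin ϑ ^ 2 = (τ * cos ϑ) ^ 2 - r ^ 2 := by
    linear_combination hB + sin_sq_add_cos_sq ϑ
  have hrk : r ≤ τ * cos ϑ := by nlinarith [sq_nonneg (sin ϑ), mul_pos hτ hcos]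
  have h₃₃ : √g₃₃ ^ 2 = g₃₃ := sq_sqrt (by rw [hg₃₃]; positivity)
  have h₁₁ : √(-g₁₁) ^ 2 = -g₁₁ :=
    sq_sqrt (by rw [hg₁₁, ← neg_div]; exact div_nonneg (by linarith) (by positivity))
  have hip : ip (γ u) (γ u) = 1 := by
    rw [hγ, ip_torusCurve_self, h₃₃, h₁₁, hg₁₁, hg₃₃]; field_simp; ring
  have hJ : ip (deriv γ u) (J1 (γ u)) = -sin ϑ ^ 2 / τ := by
    rw [hγ, ip_deriv_torusCurve_J1, h₃₃, h₁₁, hg₁₁, hg₃₃, hα₁, hα₂, hsin]; field_simp; ring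
  have hd : ip (deriv γ u) (deriv γ u) = -(sin ϑ ^ 2 * r ^ 2) / τ ^ 2 := by
    rw [hγ, ip_deriv_torusCurve_self, h₃₃, h₁₁, hg₁₁, hg₃₃, hα₁, hα₂, hsin]; field_simp; ring
  refine ⟨hip, hJ, hd, ?_, ?_⟩
  · rw [gtau_self, hJ, hd]
    field_simp
    linear_combination sin ϑ ^ 2 * hsin + sin ϑ ^ 2 * τ ^ 2 * sin_sq_add_cos_sq ϑ
  · rw [gtau_neg_inv_smul_J1 hip, hJ]; field_simp
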